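/- arXiv:2005.07895 — 2 statements merged into one kernel-verified Lean document; each statement's English description precedes it below -/
import Mathlib

section
/- Suppose A satisfies the robust null space property of order k with parameters ρ, τ: for every S with |S| ≤ k and every x ∈ R^n, ‖x_S‖₂ ≤ ρ‖x_{S^c}‖₁ + τ‖Ax‖₂. If X̄, Ȳ satisfy A_{ij} = 0 for i ∉ Ȳ, j ∈ X̄, then the submatrix A_{X̄,Ȳ} satisfies the robust null space property of order k with the same parameters ρ and τ. -/
open scoped Classical

/-- The robust null space property (coefficient ρ) of order `k` with parameters `ρ, τ` is preserved
by COMP reduction. -/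
theorem rnsp_preserved_comp {m n : ℕ} (A : Matrix (Fin m) (Fin n) ℝ)
    (k : ℕ) (ρ τ : ℝ)
    (hRNSP : ∀ S : Finset (Fin n), S.card ≤ k → ∀ x : Fin n → ℝ,
      Real.sqrt (∑ j ∈ S, x j ^ 2) ≤
        ρ * (∑ j ∈ Sᶜ, |x j|) +
          τ * Real.sqrt (∑ i, (A.mulVec x i) ^ 2))
    (Xb : Finset (Fin n)) (Yb : Finset (Fin m))
    (hA : ∀ i, i ∉ Yb → ∀ j ∈ Xb, A i j = 0) :
    ∀ B : Finset {j // j ∈ Xb}, B.card ≤ k → ∀ xb : {j // j ∈ Xb} → ℝ,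
      Real.sqrt (∑ j ∈ B, xb j ^ 2) ≤
        ρ * (∑ j ∈ Bᶜ, |xb j|) +
          τ * Real.sqrt (∑ i : {i // i ∈ Yb},
            ((A.submatrix (Subtype.val : {i // i ∈ Yb} → Fin m)
                (Subtype.val : {j // j ∈ Xb} → Fin n)).mulVec xb i) ^ 2) := by
  intro B hB xb
  -- extend xb by zero
  set x : Fin n → ℝ := fun j => if h : j ∈ Xb then xb ⟨j, h⟩ else 0 with hx
  set S : Finset (Fin n) := B.image Subtype.val with hS
  have hcard : S.card ≤ k := by
    rw [hS, Finset.card_image_of_injective _ Subtype.val_injective]; exact hB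
  have key := hRNSP S hcard x
  -- x vanishes outside Xb
  have hx0 : ∀ j, j ∉ Xb → x j = 0 := by
    intro j hj; simp [hx, hj]
  have hxval : ∀ j : {j // j ∈ Xb}, x j.val = xb j := by
    intro j; simp [hx, j.2]
  -- LHS
  have hL : ∑ j ∈ S, x j ^ 2 = ∑ j ∈ B, xb j ^ 2 := by
    rw [hS, Finset.sum_image (by intro a _ b _ h; exact Subtype.val_injective h)]
    exact Finset.sum_congr rfl fun j _ => by rw [hxval]
  -- first RHS term
  have hR1 : ∑ j ∈ Sᶜ, |x j| = ∑ j ∈ Bᶜ, |xb j| := by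
    have himg : Bᶜ.image Subtype.val = Sᶜ ∩ Xb := by
      ext j
      simp only [Finset.mem_image, Finset.mem_inter, Finset.mem_compl, hS]
      constructor
      · rintro ⟨b, hb, rfl⟩
        refine ⟨?_, b.2⟩
        intro hmem
        obtain ⟨c, hc, hce⟩ := hmem
        exact hb (Subtype.ext hce ▸ hc)
      · rintro ⟨hjs, hjx⟩
        refine ⟨⟨j, hjx⟩, ?_, rfl⟩
        intro hmem
        exact hjs ⟨⟨j, hjx⟩, hmem, rfl⟩
    have h1 : ∑ j ∈ Sᶜ, |x j| = ∑ j ∈ Sᶜ ∩ Xb, |x j| := by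
      rw [← Finset.sum_inter_add_sum_sdiff Sᶜ Xb fun j => |x j|]
      have : ∑ j ∈ Sᶜ \ Xb, |x j| = 0 :=
        Finset.sum_eq_zero fun j hj => by
          rw [hx0 j (Finset.mem_sdiff.mp hj).2]; simp
      rw [this, add_zero]
    rw [h1, ← himg,
      Finset.sum_image (by intro a _ b _ h; exact Subtype.val_injective h)]
    exact Finset.sum_congr rfl fun j _ => by rw [hxval]
  -- second RHS term
  have hR2 : ∑ i, (A.mulVec x i) ^ 2
      = ∑ i : {i // i ∈ Yb},
          ((A.submatrix (Subtype.val : {i // i ∈ Yb} → Fin m)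
              (Subtype.val : {j // j ∈ Xb} → Fin n)).mulVec xb i) ^ 2 := by
    have hmul : ∀ i : Fin m, A.mulVec x i = ∑ j ∈ Xb, A i j * x j := by
      intro i
      rw [Matrix.mulVec, dotProduct]
      rw [← Finset.sum_subset (Finset.subset_univ Xb)]
      intro j _ hj; rw [hx0 j hj, mul_zero]
    have hvan : ∀ i : Fin m, i ∉ Yb → A.mulVec x i = 0 := by
      intro i hi
      rw [hmul]
      exact Finset.sum_eq_zero fun j hj => by rw [hA i hi j hj, zero_mul]
    have hsub : ∀ i : {i // i ∈ Yb},
        (A.submatrix (Subtype.val : {i // i ∈ Yb} → Fin m)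
            (Subtype.val : {j // j ∈ Xb} → Fin n)).mulVec xb i = A.mulVec x i.val := by
      intro i
      rw [hmul, Matrix.mulVec, dotProduct]
      rw [← Finset.sum_coe_sort Xb (fun j => A i.val j * x j)]
      exact Finset.sum_congr rfl fun j _ => by rw [Matrix.submatrix_apply, hxval]
    calc ∑ i, (A.mulVec x i) ^ 2
        = ∑ i ∈ Yb, (A.mulVec x i) ^ 2 := by
          symm
          apply Finset.sum_subset (Finset.subset_univ Yb)
          intro i _ hi
          rw [hvan i hi]; simp
      _ = ∑ i : {i // i ∈ Yb}, (A.mulVec x i.val) ^ 2 :=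
          (Finset.sum_coe_sort Yb (fun i => (A.mulVec x i) ^ 2)).symm
      _ = _ := Finset.sum_congr rfl fun i _ => by rw [hsub]
  rw [hL, hR1, hR2] at key
  exact key
end

section
/- Let A be an m×n binary matrix in which every column has exactly 3 ones and every unordered pair of rows has exactly one column with ones in both rows (a Steiner triple system incidence matrix), so n = m(m−1)/6. Let x ∈ R^n be nonnegative, y = Ax, let Ȳ = {i : y_i ≠ 0} with |Ȳ| = f·m for some f ∈ (0,1), and let X̄ be the set of columns j such that every row i with A_{ij} = 1 lies in Ȳ (the samples declared positive by COMP). Then |X̄|/n < f². -/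
open scoped Classical

/-- For a Steiner triple system matrix `A` (binary, 3 ones per column, every pair of
rows together in exactly one column, `n = m(m-1)/6`), if a fraction `f ∈ (0,1)` of the
tests are positive, then the fraction of samples declared positive by COMP is
strictly less than `f²`. -/
theorem comp_steiner_surviving_fraction {m n : ℕ} (A : Matrix (Fin m) (Fin n) ℝ)
    (hbin : ∀ i j, A i j = 0 ∨ A i j = 1)
    (hcol : ∀ j, (Finset.univ.filter fun i => A i j = 1).card = 3)
    (hpair : ∀ i₁ i₂ : Fin m, i₁ ≠ i₂ →
      (Finset.univ.filter fun j => A i₁ j = 1 ∧ A i₂ j = 1).card = 1)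
    (hn : 6 * n = m * (m - 1))
    (x : Fin n → ℝ) (hx : ∀ j, 0 ≤ x j)
    (y : Fin m → ℝ) (hy : y = A.mulVec x)
    (f : ℝ) (hf₀ : 0 < f) (hf₁ : f < 1)
    (hf : ((Finset.univ.filter fun i => y i ≠ 0).card : ℝ) = f * m) :
    (((Finset.univ.filter fun j =>
        ∀ i, A i j = 1 → y i ≠ 0).card : ℝ)) / n < f ^ 2 := by
  rcases Nat.eq_zero_or_pos n with hn0 | hnpos
  · subst hn0
    simp only [Nat.cast_zero, div_zero]
    positivity
  set S : Finset (Fin m) := Finset.univ.filter fun i => y i ≠ 0 with hS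
  set T : Finset (Fin n) := Finset.univ.filter fun j => ∀ i, A i j = 1 → y i ≠ 0 with hT
  have hm : 1 ≤ m := by
    rcases Nat.eq_zero_or_pos m with h | h
    · subst h; simp at hn; omega
    · exact h
  set k := S.card with hk
  -- each column in T has exactly 6 ordered pairs of distinct rows, all in S
  have step1 : ∀ j ∈ T, ((S.offDiag).filter fun p => A p.1 j = 1 ∧ A p.2 j = 1).card = 6 := by
    intro j hj
    have hjT : ∀ i, A i j = 1 → i ∈ S := by
      intro i hi
      simp only [hT, Finset.mem_filter, Finset.mem_univ, true_and] at hj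
      simp only [hS, Finset.mem_filter, Finset.mem_univ, true_and]
      exact hj i hi
    have heq : ((S.offDiag).filter fun p => A p.1 j = 1 ∧ A p.2 j = 1)
        = (Finset.univ.filter fun i => A i j = 1).offDiag := by
      ext ⟨a, b⟩
      simp only [Finset.mem_filter, Finset.mem_offDiag, Finset.mem_univ, true_and]
      constructor
      · rintro ⟨⟨ha, hb, hab⟩, h1, h2⟩; exact ⟨h1, h2, hab⟩
      · rintro ⟨h1, h2, hab⟩; exact ⟨⟨hjT a h1, hjT b h2, hab⟩, h1, h2⟩
    rw [heq, Finset.offDiag_card, hcol j]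
  have step2 : ∀ p ∈ S.offDiag, (T.filter fun j => A p.1 j = 1 ∧ A p.2 j = 1).card ≤ 1 := by
    intro p hp
    have hne : p.1 ≠ p.2 := (Finset.mem_offDiag.mp hp).2.2
    calc (T.filter fun j => A p.1 j = 1 ∧ A p.2 j = 1).card
        ≤ (Finset.univ.filter fun j => A p.1 j = 1 ∧ A p.2 j = 1).card :=
          Finset.card_le_card (Finset.filter_subset_filter _ (Finset.subset_univ T))
      _ = 1 := hpair p.1 p.2 hne
  have hcount : 6 * T.card ≤ k * k - k := by
    have hdc : ∑ j ∈ T, ((S.offDiag).filter fun p => A p.1 j = 1 ∧ A p.2 j = 1).card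
        = ∑ p ∈ S.offDiag, (T.filter fun j => A p.1 j = 1 ∧ A p.2 j = 1).card := by
      simp only [Finset.card_filter]
      rw [Finset.sum_comm]
    have h1 : ∑ j ∈ T, ((S.offDiag).filter fun p => A p.1 j = 1 ∧ A p.2 j = 1).card
        = 6 * T.card := by
      rw [Finset.sum_congr rfl step1]
      simp [mul_comm]
    have h2 : ∑ p ∈ S.offDiag, (T.filter fun j => A p.1 j = 1 ∧ A p.2 j = 1).card
        ≤ S.offDiag.card := by
      calc _ ≤ ∑ _p ∈ S.offDiag, 1 := Finset.sum_le_sum step2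
        _ = S.offDiag.card := by simp
    rw [← hdc, h1, Finset.offDiag_card] at h2
    exact h2
  -- pass to the reals
  have hkpos : 1 ≤ k := by
    by_contra h
    push_neg at h
    have hk0 : k = 0 := by omega
    rw [hk0] at hf
    have hmR : (1:ℝ) ≤ m := by exact_mod_cast hm
    simp at hf
    rcases hf with hf | hf
    · linarith
    · omega
  have hkk : k ≤ k * k := Nat.le_mul_of_pos_left k hkpos
  have h6 : (6 * T.card : ℝ) ≤ (k : ℝ) * k - k := by
    have := hcount
    have hc : ((k * k - k : ℕ) : ℝ) = (k:ℝ) * k - k := by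
      rw [Nat.cast_sub hkk]; push_cast; ring
    calc (6 * T.card : ℝ) = ((6 * T.card : ℕ) : ℝ) := by push_cast; ring
      _ ≤ ((k * k - k : ℕ) : ℝ) := by exact_mod_cast this
      _ = (k:ℝ) * k - k := hc
  have hkf : (k : ℝ) = f * m := hf
  have hnR : (0:ℝ) < n := by exact_mod_cast hnpos
  rw [div_lt_iff₀ hnR]
  have hn' : 6 * (n:ℝ) = (m:ℝ) * ((m:ℝ) - 1) := by
    have : ((6 * n : ℕ) : ℝ) = ((m * (m - 1) : ℕ) : ℝ) := by rw [hn]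
    rw [Nat.cast_mul, Nat.cast_mul, Nat.cast_sub hm] at this
    push_cast at this ⊢
    linarith
  have hfm : (0:ℝ) < f * m := by
    have : (1:ℝ) ≤ (k:ℝ) := by exact_mod_cast hkpos
    linarith [hkf ▸ this]
  nlinarith [mul_pos hfm (show (0:ℝ) < 1 - f by linarith)]
end
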